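/- arXiv:funct-an/9608006 — 7 statements merged into one kernel-verified Lean document; each statement's English description precedes it below -/
import Mathlib

section
/- For g ∈ C_c(H × G × G, A), f ∈ C_c(G × G, A) and x ∈ C_c(G, A), define (g·f)(r,s) = ∫_G ∫_H g(k,u,s) α_u(f(u⁻¹r, u⁻¹sk)) Δ_H(k)^{1/2} dk du and ψ(f,x)(h,s) = ∫_G f(t,s) α_t(x(t⁻¹sh)) Δ_H(h)^{-1/2} Δ_G(t)^{1/2} dt. Then for every h ∈ H and s ∈ G: ψ(g·f, x)(h,s) = ∫_G ∫_H g(k,u,s) α_u(ψ(f,x)(k⁻¹h, u⁻¹sk)) Δ_G(u)^{1/2} dk du. -/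
open MeasureTheory
open scoped Pointwise

section aux
variable {X Y E : Type*} [TopologicalSpace X] [TopologicalSpace Y]
  [NormedAddCommGroup E] [NormedSpace ℝ E]

theorem aux_supp_of_subset [T2Space X] {F : X → E} {K : Set X} (hK : IsCompact K)
    (h : ∀ p, F p ≠ 0 → p ∈ K) : HasCompactSupport F :=
  HasCompactSupport.intro hK fun p hp => by
    by_contra h0; exact hp (h p h0)

theorem aux_cont_integral [T2Space Y] [MeasurableSpace Y] [OpensMeasurableSpace Y]
    {F : X × Y → E} (hc : Continuous F) (hs : HasCompactSupport F)
    (ν : Measure Y) [IsFiniteMeasureOnCompacts ν] :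
    Continuous fun x => ∫ y, F (x, y) ∂ν := by
  rw [← continuousOn_univ]
  apply continuousOn_integral_of_compact_support (μ := ν) (k := Prod.snd '' tsupport F)
    (f := fun x y => F (x, y)) (s := Set.univ) (hs.image continuous_snd)
  · exact hc.continuousOn
  · intro p y _ hy
    by_contra hFy
    exact hy ⟨(p, y), subset_tsupport _ hFy, rfl⟩

theorem aux_supp_integral [T2Space X] [MeasurableSpace Y]
    {F : X × Y → E} (hs : HasCompactSupport F)
    (ν : Measure Y) :
    HasCompactSupport fun x => ∫ y, F (x, y) ∂ν := by
  apply aux_supp_of_subset (hs.image continuous_fst)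
  intro p hp
  by_contra hmem
  apply hp
  have : ∀ y, F (p, y) = 0 := by
    intro y
    by_contra hFy
    exact hmem ⟨(p, y), subset_tsupport _ hFy, rfl⟩
  simp [this]

/-- multiplicativity and continuity of an abstract modular function -/
theorem modular_aux {G : Type*} [Group G] [TopologicalSpace G] [IsTopologicalGroup G]
    [LocallyCompactSpace G] [T2Space G] [MeasurableSpace G] [BorelSpace G]
    (μ : Measure G) [μ.IsHaarMeasure]
    (Δ : G → ℝ) (hpos : ∀ t, 0 < Δ t)
    (hΔ : ∀ f : G → ℝ, Continuous f → HasCompactSupport f →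
      ∀ t : G, ∫ s, f (s * t) ∂μ = (Δ t)⁻¹ * ∫ s, f s ∂μ) :
    (∀ a b : G, Δ (a * b) = Δ a * Δ b) ∧ Continuous Δ := by
  obtain ⟨f₀, f₀_supp, f₀_nonneg, f₀_pos⟩ := exists_continuous_nonneg_pos (1 : G)
  have I_pos : 0 < ∫ u, f₀ u ∂μ :=
    f₀.continuous.integral_pos_of_hasCompactSupport_nonneg_nonzero f₀_supp f₀_nonneg f₀_pos
  have I_ne : (∫ u, f₀ u ∂μ) ≠ 0 := ne_of_gt I_pos
  have key : ∀ t, ∫ u, f₀ (u * t) ∂μ = (Δ t)⁻¹ * ∫ u, f₀ u ∂μ :=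
    hΔ f₀ f₀.continuous f₀_supp
  have hmul : ∀ a b : G, Δ (a * b) = Δ a * Δ b := by
    intro a b
    have h1 : HasCompactSupport fun u => f₀ (u * b) :=
      f₀_supp.comp_homeomorph (Homeomorph.mulRight b)
    have h2 := hΔ (fun u => f₀ (u * b)) (f₀.continuous.comp (continuous_mul_right b)) h1 a
    have h3 : ∫ u, f₀ (u * a * b) ∂μ = (Δ (a * b))⁻¹ * ∫ u, f₀ u ∂μ := by
      simpa only [mul_assoc] using key (a * b)
    rw [h3, key b] at h2
    have h4 : (Δ (a * b))⁻¹ * ∫ u, f₀ u ∂μ = ((Δ a)⁻¹ * (Δ b)⁻¹) * ∫ u, f₀ u ∂μ := by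
      rw [mul_assoc]; exact h2
    have h5 := mul_right_cancel₀ I_ne h4
    rw [← mul_inv] at h5
    exact inv_injective h5
  refine ⟨hmul, ?_⟩
  have cont_conv : Continuous fun t => ∫ u, f₀ (u * t) ∂μ := by
    rw [continuous_iff_continuousAt]
    intro t₀
    obtain ⟨V, V_comp, hV⟩ := exists_compact_mem_nhds t₀
    have : ContinuousOn (fun t => ∫ u, f₀ (u * t) ∂μ) V := by
      apply continuousOn_integral_of_compact_support (μ := μ) (f₀_supp.mul V_comp.inv)
      · exact (f₀.continuous.comp (continuous_snd.mul continuous_fst)).continuousOn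
      · intro t u ht hu
        by_contra hne
        refine hu ?_
        have : u * t * t⁻¹ ∈ tsupport f₀ * V⁻¹ :=
          Set.mul_mem_mul (subset_tsupport _ hne) (Set.inv_mem_inv.mpr ht)
        simpa using this
    exact this.continuousAt hV
  have conv_ne : ∀ t, (∫ u, f₀ (u * t) ∂μ) ≠ 0 := by
    intro t
    rw [key t]
    exact mul_ne_zero (inv_ne_zero (hpos t).ne') I_ne
  have hEq : Δ = fun t => (∫ u, f₀ u ∂μ) / (∫ u, f₀ (u * t) ∂μ) := by
    funext t
    rw [key t]
    rw [eq_div_iff (mul_ne_zero (inv_ne_zero (hpos t).ne') I_ne)]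
    rw [← mul_assoc, mul_inv_cancel₀ (hpos t).ne', one_mul]
  rw [hEq]
  exact continuous_const.div cont_conv conv_ne

end aux

set_option maxHeartbeats 1000000 in
/-- `ψ(g·f, x)(h,s) = ∫_G ∫_H g(k,u,s) α_u(ψ(f,x)(k⁻¹h, u⁻¹sk)) Δ_G(u)^{1/2} dk du`:
the map `(f, x) ↦ ψ(f,x)` intertwines the left module actions. -/
theorem stmt_7 {G : Type*} [Group G] [TopologicalSpace G] [IsTopologicalGroup G]
    [LocallyCompactSpace G] [T2Space G] [MeasurableSpace G] [BorelSpace G]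
    (μ : Measure G) [μ.IsHaarMeasure]
    (H : Subgroup G) (hH : IsClosed (H : Set G))
    (ν : Measure ↥H) [ν.IsHaarMeasure]
    (ΔG : G → ℝ) (hΔG_pos : ∀ t, 0 < ΔG t)
    (hΔG : ∀ f : G → ℝ, Continuous f → HasCompactSupport f →
      ∀ t : G, ∫ s, f (s * t) ∂μ = (ΔG t)⁻¹ * ∫ s, f s ∂μ)
    (ΔH : ↥H → ℝ) (hΔH_pos : ∀ h, 0 < ΔH h)
    (hΔH : ∀ f : ↥H → ℝ, Continuous f → HasCompactSupport f →
      ∀ h : ↥H, ∫ k, f (k * h) ∂ν = (ΔH h)⁻¹ * ∫ k, f k ∂ν)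
    {A : Type*} [NonUnitalCStarAlgebra A]
    (α : G → A ≃⋆ₐ[ℂ] A) (hα_one : ∀ a : A, α 1 a = a)
    (hα_mul : ∀ s t : G, ∀ a : A, α (s * t) a = α s (α t a))
    (hα_cont : Continuous fun p : G × A => α p.1 p.2)
    (g : ↥H × G × G → A) (hg_cont : Continuous g) (hg_supp : HasCompactSupport g)
    (f : G × G → A) (hf_cont : Continuous f) (hf_supp : HasCompactSupport f)
    (x : G → A) (hx_cont : Continuous x) (hx_supp : HasCompactSupport x)
    (gf : G × G → A)
    (hgf : ∀ (r s : G), gf (r, s) =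
      ∫ u, ∫ k, Real.sqrt (ΔH k) •
        (g (k, u, s) * α u (f (u⁻¹ * r, u⁻¹ * s * (k : G)))) ∂ν ∂μ)
    (ψfx : ↥H × G → A)
    (hψfx : ∀ (h : ↥H) (s : G), ψfx (h, s) =
      ∫ t, ((Real.sqrt (ΔH h))⁻¹ * Real.sqrt (ΔG t)) •
        (f (t, s) * α t (x (t⁻¹ * s * (h : G)))) ∂μ) :
    ∀ (h : ↥H) (s : G),
      (∫ t, ((Real.sqrt (ΔH h))⁻¹ * Real.sqrt (ΔG t)) •
          (gf (t, s) * α t (x (t⁻¹ * s * (h : G)))) ∂μ) =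
        ∫ u, ∫ k, Real.sqrt (ΔG u) •
          (g (k, u, s) * α u (ψfx (k⁻¹ * h, u⁻¹ * s * (k : G)))) ∂ν ∂μ := by
  intro h s
  haveI : LocallyCompactSpace ↥H := hH.locallyCompactSpace
  haveI : BorelSpace ↥H := Subtype.borelSpace (H : Set G)
  obtain ⟨ΔG_mul, ΔG_cont⟩ := modular_aux μ ΔG hΔG_pos hΔG
  obtain ⟨ΔH_mul, ΔH_cont⟩ := modular_aux ν ΔH hΔH_pos hΔH
  -- square-root facts
  have sqrtG_mul : ∀ u t : G, Real.sqrt (ΔG (u * t)) = Real.sqrt (ΔG u) * Real.sqrt (ΔG t) :=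
    fun u t => by rw [ΔG_mul, Real.sqrt_mul (hΔG_pos u).le]
  have sqrtH_key : ∀ k : ↥H,
      (Real.sqrt (ΔH (k⁻¹ * h)))⁻¹ = Real.sqrt (ΔH k) * (Real.sqrt (ΔH h))⁻¹ := by
    intro k
    have e1 : ΔH (k⁻¹ * h) = (ΔH k)⁻¹ * ΔH h := by
      have e2 := ΔH_mul k (k⁻¹ * h)
      rw [mul_inv_cancel_left] at e2
      rw [eq_inv_mul_iff_mul_eq₀ (hΔH_pos k).ne']
      exact e2.symm
    rw [e1, Real.sqrt_mul (inv_nonneg.mpr (hΔH_pos k).le), Real.sqrt_inv, mul_inv, inv_inv]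
  -- facts about the action
  have α_cont : ∀ u : G, Continuous fun a : A => α u a :=
    fun u => hα_cont.comp (Continuous.prodMk_right u)
  have α_smulR : ∀ (u : G) (r : ℝ) (a : A), α u (r • a) = r • α u a := fun u r a => by
    rw [← Complex.coe_smul, ← Complex.coe_smul, _root_.map_smul]
  let αL : G → A →L[ℝ] A := fun u =>
    { toFun := fun a => α u a
      map_add' := fun a b => map_add _ a b
      map_smul' := fun r a => α_smulR u r a
      cont := α_cont u }
  -- compact sets controlling supports
  have KHc : IsCompact (Prod.fst '' tsupport g) := hg_supp.image continuous_fst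
  have KUc : IsCompact ((fun q : ↥H × G × G => q.2.1) '' tsupport g) :=
    hg_supp.image (continuous_fst.comp continuous_snd)
  have KFc : IsCompact (Prod.fst '' tsupport f) := hf_supp.image continuous_fst
  have KTc : IsCompact (((fun q : ↥H × G × G => q.2.1) '' tsupport g) *
      (Prod.fst '' tsupport f)) := KUc.mul KFc
  -- the master integrands
  set X : G → A := fun t => α t (x (t⁻¹ * s * (h : G))) with hX
  set Θ : G × G × ↥H → A := fun p =>
    Real.sqrt (ΔH p.2.2) •
      (g (p.2.2, p.2.1, s) * α p.2.1 (f (p.2.1⁻¹ * p.1, p.2.1⁻¹ * s * (p.2.2 : G)))) with hΘ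
  set Φ : G × G × ↥H → A := fun p =>
    ((Real.sqrt (ΔH h))⁻¹ * Real.sqrt (ΔG p.1)) • (Θ p * X p.1) with hΦ
  have Θmem : ∀ p : G × G × ↥H, Θ p ≠ 0 →
      p.1 ∈ ((fun q : ↥H × G × G => q.2.1) '' tsupport g) * (Prod.fst '' tsupport f) ∧
      p.2.1 ∈ (fun q : ↥H × G × G => q.2.1) '' tsupport g ∧
      p.2.2 ∈ Prod.fst '' tsupport g := by
    intro p hp
    have hg0 : g (p.2.2, p.2.1, s) ≠ 0 := by intro e; apply hp; simp [hΘ, e]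
    have hf0 : f (p.2.1⁻¹ * p.1, p.2.1⁻¹ * s * (p.2.2 : G)) ≠ 0 := by
      intro e; apply hp; simp [hΘ, e]
    have h1 : (p.2.2, p.2.1, s) ∈ tsupport g := subset_tsupport _ hg0
    have h2 : (p.2.1⁻¹ * p.1, p.2.1⁻¹ * s * (p.2.2 : G)) ∈ tsupport f := subset_tsupport _ hf0
    refine ⟨?_, ⟨(p.2.2, p.2.1, s), h1, rfl⟩, ⟨(p.2.2, p.2.1, s), h1, rfl⟩⟩
    have h3 : p.2.1 * (p.2.1⁻¹ * p.1) ∈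
        ((fun q : ↥H × G × G => q.2.1) '' tsupport g) * (Prod.fst '' tsupport f) :=
      Set.mul_mem_mul ⟨(p.2.2, p.2.1, s), h1, rfl⟩ ⟨_, h2, rfl⟩
    simpa using h3
  have Φmem : ∀ p : G × G × ↥H, Φ p ≠ 0 →
      p.1 ∈ ((fun q : ↥H × G × G => q.2.1) '' tsupport g) * (Prod.fst '' tsupport f) ∧
      p.2.1 ∈ (fun q : ↥H × G × G => q.2.1) '' tsupport g ∧
      p.2.2 ∈ Prod.fst '' tsupport g := by
    intro p hp
    apply Θmem
    intro e; apply hp; simp [hΦ, e]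
  -- continuity of the master integrands
  have Θc : Continuous Θ := by
    rw [hΘ]
    apply Continuous.smul (M := ℝ)
    · exact (ΔH_cont.comp (continuous_snd.comp continuous_snd)).sqrt
    · apply Continuous.mul
      · exact hg_cont.comp (((continuous_snd.comp continuous_snd)).prodMk
          ((continuous_fst.comp continuous_snd).prodMk continuous_const))
      · exact hα_cont.comp ((continuous_fst.comp continuous_snd).prodMk
          (hf_cont.comp (by fun_prop)))
  have Xc : Continuous X := by
    rw [hX]
    exact hα_cont.comp (continuous_id.prodMk (hx_cont.comp (by fun_prop)))
  have Φc : Continuous Φ := by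
    rw [hΦ]
    exact (continuous_const.mul ((ΔG_cont.comp continuous_fst).sqrt)).smul
      (Θc.mul (Xc.comp continuous_fst))
  -- compact supports of the master integrands
  have Θs : HasCompactSupport Θ :=
    aux_supp_of_subset (KTc.prod (KUc.prod KHc))
      (fun p hp => ⟨(Θmem p hp).1, (Θmem p hp).2.1, (Θmem p hp).2.2⟩)
  have Φs : HasCompactSupport Φ :=
    aux_supp_of_subset (KTc.prod (KUc.prod KHc))
      (fun p hp => ⟨(Φmem p hp).1, (Φmem p hp).2.1, (Φmem p hp).2.2⟩)
  -- step 1 : pulling the scalar and the right multiplication inside the double integral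
  have step1 : ∀ t : G, (∫ u, ∫ k, Φ (t, u, k) ∂ν ∂μ) =
      ((Real.sqrt (ΔH h))⁻¹ * Real.sqrt (ΔG t)) • (gf (t, s) * X t) := by
    intro t
    have Ik : ∀ u : G, Integrable (fun k => Θ (t, u, k)) ν := by
      intro u
      apply Continuous.integrable_of_hasCompactSupport
      · exact Θc.comp (by fun_prop)
      · exact aux_supp_of_subset KHc (fun k hk => (Θmem _ hk).2.2)
    have Θtc : Continuous fun q : G × ↥H => Θ (t, q.1, q.2) := Θc.comp (by fun_prop)
    have Θts : HasCompactSupport fun q : G × ↥H => Θ (t, q.1, q.2) :=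
      aux_supp_of_subset (KUc.prod KHc) (fun q hq => ⟨(Θmem _ hq).2.1, (Θmem _ hq).2.2⟩)
    have Iu : Integrable (fun u => ∫ k, Θ (t, u, k) ∂ν) μ :=
      (aux_cont_integral Θtc Θts ν).integrable_of_hasCompactSupport
        (aux_supp_integral Θts ν)
    have e2 : ∀ u : G, (∫ k, Θ (t, u, k) * X t ∂ν) = (∫ k, Θ (t, u, k) ∂ν) * X t :=
      fun u => ((ContinuousLinearMap.mul ℝ A).flip (X t)).integral_comp_comm (Ik u)
    have e3 : (∫ u, (∫ k, Θ (t, u, k) ∂ν) * X t ∂μ) =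
        (∫ u, ∫ k, Θ (t, u, k) ∂ν ∂μ) * X t :=
      ((ContinuousLinearMap.mul ℝ A).flip (X t)).integral_comp_comm Iu
    calc (∫ u, ∫ k, Φ (t, u, k) ∂ν ∂μ)
        = ∫ u, ∫ k, ((Real.sqrt (ΔH h))⁻¹ * Real.sqrt (ΔG t)) • (Θ (t, u, k) * X t) ∂ν ∂μ := rfl
      _ = ((Real.sqrt (ΔH h))⁻¹ * Real.sqrt (ΔG t)) • ∫ u, ∫ k, Θ (t, u, k) * X t ∂ν ∂μ := by
          simp_rw [integral_smul]
      _ = ((Real.sqrt (ΔH h))⁻¹ * Real.sqrt (ΔG t)) •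
            ((∫ u, ∫ k, Θ (t, u, k) ∂ν ∂μ) * X t) := by
          simp_rw [e2]; rw [e3]
      _ = ((Real.sqrt (ΔH h))⁻¹ * Real.sqrt (ΔG t)) • (gf (t, s) * X t) := by
          rw [hgf t s]
  -- step 2 : swap the `t` and `u` integrals
  have Φs' : HasCompactSupport fun q : (G × G) × ↥H => Φ (q.1.1, q.1.2, q.2) :=
    aux_supp_of_subset ((KTc.prod KUc).prod KHc)
      (fun q hq => ⟨⟨(Φmem _ hq).1, (Φmem _ hq).2.1⟩, (Φmem _ hq).2.2⟩)
  have Φc' : Continuous fun q : (G × G) × ↥H => Φ (q.1.1, q.1.2, q.2) :=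
    Φc.comp (by fun_prop)
  have cont2 : Continuous fun p : G × G => ∫ k, Φ (p.1, p.2, k) ∂ν :=
    aux_cont_integral Φc' Φs' ν
  have supp2 : HasCompactSupport fun p : G × G => ∫ k, Φ (p.1, p.2, k) ∂ν :=
    aux_supp_integral Φs' ν
  have swap1 : (∫ t, ∫ u, (∫ k, Φ (t, u, k) ∂ν) ∂μ ∂μ) =
      ∫ u, ∫ t, (∫ k, Φ (t, u, k) ∂ν) ∂μ ∂μ :=
    integral_integral_swap_of_hasCompactSupport
      (f := fun t u => ∫ k, Φ (t, u, k) ∂ν) cont2 supp2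
  -- step 3 : swap the `t` and `k` integrals
  have swap2 : ∀ u : G, (∫ t, ∫ k, Φ (t, u, k) ∂ν ∂μ) = ∫ k, ∫ t, Φ (t, u, k) ∂μ ∂ν := by
    intro u
    apply integral_integral_swap_of_hasCompactSupport
      (f := fun t k => Φ (t, u, k))
    · exact Φc.comp (show Continuous fun q : G × ↥H => (q.1, u, q.2) by fun_prop)
    · exact aux_supp_of_subset (KTc.prod KHc)
        (fun q hq => ⟨(Φmem _ hq).1, (Φmem _ hq).2.2⟩)
  -- step 4 : left invariance
  have step4 : ∀ (u : G) (k : ↥H), (∫ t, Φ (t, u, k) ∂μ) = ∫ t, Φ (u * t, u, k) ∂μ :=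
    fun u k => (integral_mul_left_eq_self (fun t => Φ (t, u, k)) u).symm
  -- step 5 : identification with the right-hand side
  have step5 : ∀ (u : G) (k : ↥H), (∫ t, Φ (u * t, u, k) ∂μ) =
      Real.sqrt (ΔG u) • (g (k, u, s) * α u (ψfx (k⁻¹ * h, u⁻¹ * s * (k : G)))) := by
    intro u k
    rw [hψfx (k⁻¹ * h) (u⁻¹ * s * (k : G))]
    set W : G → A := fun t => ((Real.sqrt (ΔH (k⁻¹ * h)))⁻¹ * Real.sqrt (ΔG t)) •
      (f (t, u⁻¹ * s * (k : G)) *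
        α t (x (t⁻¹ * (u⁻¹ * s * (k : G)) * ((k⁻¹ * h : ↥H) : G)))) with hW
    have Wc : Continuous W := by
      rw [hW]
      apply Continuous.smul (M := ℝ)
      · exact continuous_const.mul ΔG_cont.sqrt
      · exact (hf_cont.comp (by fun_prop)).mul
          (hα_cont.comp (continuous_id.prodMk (hx_cont.comp (by fun_prop))))
    have Ws : HasCompactSupport W := by
      apply aux_supp_of_subset KFc
      intro t ht
      have hf0 : f (t, u⁻¹ * s * (k : G)) ≠ 0 := by
        intro e; apply ht; simp [hW, e]
      exact ⟨_, subset_tsupport _ hf0, rfl⟩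
    have IW : Integrable W μ := Wc.integrable_of_hasCompactSupport Ws
    have IαW : Integrable (fun t => α u (W t)) μ := (αL u).integrable_comp IW
    have e5a : α u (∫ t, W t ∂μ) = ∫ t, α u (W t) ∂μ := ((αL u).integral_comp_comm IW).symm
    have e5b : g (k, u, s) * (∫ t, α u (W t) ∂μ) = ∫ t, g (k, u, s) * α u (W t) ∂μ :=
      ((ContinuousLinearMap.mul ℝ A (g (k, u, s))).integral_comp_comm IαW).symm
    rw [e5a, e5b, ← integral_smul]
    refine integral_congr_ae (Filter.Eventually.of_forall fun t => ?_)
    have arg1 : u⁻¹ * (u * t) = t := by group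
    simp only [hΦ, hΘ, hX, hW, arg1, sqrtH_key k, sqrtG_mul u t,
      α_smulR, map_mul, hα_mul, smul_smul, smul_mul_assoc, mul_smul_comm, mul_assoc]
    have arg2 : ((u * t)⁻¹ * (s * (h : G))) =
        t⁻¹ * (u⁻¹ * (s * ((k : G) * ((k⁻¹ * h : ↥H) : G)))) := by
      push_cast
      group
    rw [arg2]
    congr 1
    ring
  -- putting everything together
  calc (∫ t, ((Real.sqrt (ΔH h))⁻¹ * Real.sqrt (ΔG t)) •
          (gf (t, s) * α t (x (t⁻¹ * s * (h : G)))) ∂μ)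
      = ∫ t, ∫ u, ∫ k, Φ (t, u, k) ∂ν ∂μ ∂μ := by
        refine integral_congr_ae (Filter.Eventually.of_forall fun t => ?_)
        exact (step1 t).symm
    _ = ∫ u, ∫ t, ∫ k, Φ (t, u, k) ∂ν ∂μ ∂μ := swap1
    _ = ∫ u, ∫ k, ∫ t, Φ (t, u, k) ∂μ ∂ν ∂μ := by
        refine integral_congr_ae (Filter.Eventually.of_forall fun u => ?_)
        exact swap2 u
    _ = ∫ u, ∫ k, ∫ t, Φ (u * t, u, k) ∂μ ∂ν ∂μ := by
        refine integral_congr_ae (Filter.Eventually.of_forall fun u => ?_)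
        refine integral_congr_ae (Filter.Eventually.of_forall fun k => ?_)
        exact step4 u k
    _ = ∫ u, ∫ k, Real.sqrt (ΔG u) •
          (g (k, u, s) * α u (ψfx (k⁻¹ * h, u⁻¹ * s * (k : G)))) ∂ν ∂μ := by
        refine integral_congr_ae (Filter.Eventually.of_forall fun u => ?_)
        refine integral_congr_ae (Filter.Eventually.of_forall fun k => ?_)
        exact step5 u k
end

section
/- Define Ind ρ to be the set of continuous functions g : G × G → A such that g(rt, st) = g(r,s) for all r, s, t ∈ G and such that the function s ↦ g(e,s) lies in C₀(G, A). Then the map Θ : C₀(G, A) → Ind ρ defined by Θ(f)(r,s) = f(s r⁻¹) is a bijection preserving pointwise addition, scalar multiplication, multiplication and involution, with inverse g ↦ (s ↦ g(e,s)); moreover, for every (h,t) ∈ H × G and f ∈ C₀(G,A), Θ(α̃_{(h,t)}(f)) = γ_{(h,t)}(Θ(f)), where α̃_{(h,t)}(f)(s) = α_t(f(t⁻¹ s h)) and γ_{(h,t)}(g)(r,s) = α_t(g(h⁻¹ r, t⁻¹ s)). -/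
open ZeroAtInfty

/-- The map `Θ(f)(r,s) = f(sr⁻¹)` is a *-isomorphism of `C₀(G, A)` onto the induced algebra
`Ind ρ` of continuous functions on `G × G` invariant under the right diagonal translation,
with inverse `g ↦ (s ↦ g(e,s))`, and it intertwines the action `α̃` of `H × G` with `γ`. -/
theorem stmt_10 {G : Type*} [Group G] [TopologicalSpace G] [IsTopologicalGroup G]
    [LocallyCompactSpace G] [T2Space G] (H : Subgroup G) (hH : IsClosed (H : Set G))
    {A : Type*} [NonUnitalCStarAlgebra A]
    (α : G → A ≃⋆ₐ[ℂ] A) (hα_one : ∀ a : A, α 1 a = a)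
    (hα_mul : ∀ s t : G, ∀ a : A, α (s * t) a = α s (α t a))
    (hα_cont : Continuous fun p : G × A => α p.1 p.2)
    (Indρ : Set (G × G → A))
    (hIndρ : Indρ = {g : G × G → A | Continuous g ∧
      (∀ r s t : G, g (r * t, s * t) = g (r, s)) ∧
      ∃ g₀ : C₀(G, A), ∀ s : G, g₀ s = g (1, s)})
    (Θ : C₀(G, A) → (G × G → A))
    (hΘ : ∀ (f : C₀(G, A)) (p : G × G), Θ f p = f (p.2 * p.1⁻¹)) :
    (∀ f : C₀(G, A), Θ f ∈ Indρ) ∧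
    Function.Injective Θ ∧
    Set.range Θ = Indρ ∧
    (∀ f g : C₀(G, A), Θ (f + g) = Θ f + Θ g) ∧
    (∀ (c : ℂ) (f : C₀(G, A)), Θ (c • f) = c • Θ f) ∧
    (∀ f g : C₀(G, A), Θ (f * g) = Θ f * Θ g) ∧
    (∀ f : C₀(G, A), Θ (star f) = star (Θ f)) ∧
    (∀ g ∈ Indρ, ∀ f : C₀(G, A), (∀ s : G, f s = g (1, s)) → Θ f = g) ∧
    (∀ h : ↥H, ∀ t : G, ∀ f f' : C₀(G, A),
      (∀ s : G, f' s = α t (f (t⁻¹ * s * (h : G)))) →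
      ∀ p : G × G, Θ f' p = α t (Θ f ((h : G)⁻¹ * p.1, t⁻¹ * p.2))) := by
  have hmem : ∀ f : C₀(G, A), Θ f ∈ Indρ := by
    intro f
    rw [hIndρ]
    refine ⟨?_, ?_, ⟨f, ?_⟩⟩
    · have : Continuous fun p : G × G => f (p.2 * p.1⁻¹) :=
        f.continuous.comp (continuous_snd.mul continuous_fst.inv)
      simpa [funext fun p => hΘ f p] using this
    · intro r s t; rw [hΘ, hΘ]; simp [mul_assoc]
    · intro s; rw [hΘ]; simp
  have hinv : ∀ g ∈ Indρ, ∀ f : C₀(G, A), (∀ s : G, f s = g (1, s)) → Θ f = g := by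
    intro g hg f hf
    rw [hIndρ] at hg
    obtain ⟨-, hginv, -⟩ := hg
    funext p
    rw [hΘ, hf]
    have := hginv 1 (p.2 * p.1⁻¹) p.1
    simpa using this.symm
  refine ⟨hmem, ?_, ?_, ?_, ?_, ?_, ?_, hinv, ?_⟩
  · intro f f' hff
    ext s
    have := congrFun hff (1, s)
    rw [hΘ, hΘ] at this
    simpa using this
  · apply Set.eq_of_subset_of_subset
    · rintro _ ⟨f, rfl⟩; exact hmem f
    · intro g hg
      have hg' := hg
      rw [hIndρ] at hg'
      obtain ⟨-, -, g₀, hg₀⟩ := hg'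
      exact ⟨g₀, hinv g hg g₀ hg₀⟩
  · intro f g; funext p; rw [hΘ]; simp [hΘ]
  · intro c f; funext p; rw [hΘ]; simp [hΘ]
  · intro f g; funext p; rw [hΘ]; simp [hΘ]
  · intro f; funext p; rw [hΘ]; simp [hΘ]
  · intro h t f f' hf p
    rw [hΘ, hf, hΘ]
    congr 2
    group
end

section
/- Define Ind σ to be the set of continuous functions g : G × G → A such that g(hr, ts) = α_t(g(r,s)) for all h ∈ H and r, s, t ∈ G, and such that the function G/H → ℝ given by rH ↦ ‖g(r⁻¹, e)‖ is well defined and vanishes at infinity on G/H. Then the map Ω : C₀(G/H, A) → Ind σ defined by Ω(f)(r,s) = α_s(f(r⁻¹H)) is a bijection preserving pointwise addition, scalar multiplication, multiplication and involution, with inverse g ↦ (tH ↦ g(t⁻¹, e)); moreover, for every t ∈ G and f ∈ C₀(G/H, A), Ω((α⊗τ)_t(f)) = δ_t(Ω(f)), where (α⊗τ)_t(f)(sH) = α_t(f(t⁻¹sH)) and δ_t(g)(r,s) = g(rt, st). -/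
open ZeroAtInfty

/-- The map `Ω(f)(r,s) = α_s(f(r⁻¹H))` is a *-isomorphism of `C₀(G/H, A)` onto the induced
algebra `Ind σ`, with inverse `g ↦ (tH ↦ g(t⁻¹, e))`, intertwining the diagonal action
`α ⊗ τ` of `G` with the action `δ`. -/
theorem stmt_11 {G : Type*} [Group G] [TopologicalSpace G] [IsTopologicalGroup G]
    [LocallyCompactSpace G] [T2Space G] (H : Subgroup G) (hH : IsClosed (H : Set G))
    {A : Type*} [NonUnitalCStarAlgebra A]
    (α : G → A ≃⋆ₐ[ℂ] A) (hα_one : ∀ a : A, α 1 a = a)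
    (hα_mul : ∀ s t : G, ∀ a : A, α (s * t) a = α s (α t a))
    (hα_cont : Continuous fun p : G × A => α p.1 p.2)
    (Indσ : Set (G × G → A))
    (hIndσ : Indσ = {g : G × G → A | Continuous g ∧
      (∀ h ∈ H, ∀ r s t : G, g (h * r, t * s) = α t (g (r, s))) ∧
      ∃ φ : G ⧸ H → ℝ, (∀ r : G, φ (QuotientGroup.mk r) = ‖g (r⁻¹, 1)‖) ∧
        Filter.Tendsto φ (Filter.cocompact (G ⧸ H)) (nhds 0)})
    (Ω : C₀(G ⧸ H, A) → (G × G → A))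
    (hΩ : ∀ (f : C₀(G ⧸ H, A)) (p : G × G),
      Ω f p = α p.2 (f (QuotientGroup.mk p.1⁻¹))) :
    (∀ f : C₀(G ⧸ H, A), Ω f ∈ Indσ) ∧
    Function.Injective Ω ∧
    Set.range Ω = Indσ ∧
    (∀ f g : C₀(G ⧸ H, A), Ω (f + g) = Ω f + Ω g) ∧
    (∀ (c : ℂ) (f : C₀(G ⧸ H, A)), Ω (c • f) = c • Ω f) ∧
    (∀ f g : C₀(G ⧸ H, A), Ω (f * g) = Ω f * Ω g) ∧
    (∀ f : C₀(G ⧸ H, A), Ω (star f) = star (Ω f)) ∧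
    (∀ g ∈ Indσ, ∀ f : C₀(G ⧸ H, A),
      (∀ t : G, f (QuotientGroup.mk t) = g (t⁻¹, 1)) → Ω f = g) ∧
    (∀ t : G, ∀ f f' : C₀(G ⧸ H, A),
      (∀ s : G, f' (QuotientGroup.mk s) = α t (f (QuotientGroup.mk (t⁻¹ * s)))) →
      ∀ p : G × G, Ω f' p = Ω f (p.1 * t, p.2 * t)) := by
  -- membership
  have hmem : ∀ f : C₀(G ⧸ H, A), Ω f ∈ Indσ := by
    intro f
    rw [hIndσ]
    refine ⟨?_, ?_, ?_⟩
    · have : Continuous fun p : G × G => α p.2 (f (QuotientGroup.mk p.1⁻¹)) :=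
        hα_cont.comp (continuous_snd.prodMk (f.continuous.comp
          (continuous_quotient_mk'.comp (continuous_inv.comp continuous_fst))))
      have hfun : Ω f = fun p : G × G => α p.2 (f (QuotientGroup.mk p.1⁻¹)) :=
        funext fun p => hΩ f p
      rw [hfun]; exact this
    · intro h hh r s t
      rw [hΩ, hΩ]
      have hq : QuotientGroup.mk ((h * r : G))⁻¹ = (QuotientGroup.mk r⁻¹ : G ⧸ H) := by
        rw [QuotientGroup.eq]
        simp [mul_assoc, hh]
      simp only [hq]
      exact hα_mul t s _
    · refine ⟨fun q => ‖f q‖, ?_, ?_⟩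
      · intro r
        rw [hΩ]
        simp [hα_one]
      · have := f.zero_at_infty'.norm
        simpa using this
  -- key inverse lemma
  have key : ∀ g ∈ Indσ, ∀ f : C₀(G ⧸ H, A),
      (∀ t : G, f (QuotientGroup.mk t) = g (t⁻¹, 1)) → Ω f = g := by
    intro g hg f hf
    rw [hIndσ] at hg
    obtain ⟨-, heq, -⟩ := hg
    funext p
    obtain ⟨r, s⟩ := p
    rw [hΩ]
    simp only
    rw [hf r⁻¹, inv_inv]
    have := heq 1 H.one_mem r 1 s
    rw [one_mul, mul_one] at this
    exact this.symm
  -- injectivity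
  have hinj : Function.Injective Ω := by
    intro f f' hff
    ext q
    obtain ⟨r, rfl⟩ := QuotientGroup.mk_surjective q
    have h1 : Ω f (r⁻¹, 1) = Ω f' (r⁻¹, 1) := by rw [hff]
    rw [hΩ, hΩ] at h1
    simpa [hα_one] using h1
  refine ⟨hmem, hinj, ?_, ?_, ?_, ?_, ?_, key, ?_⟩
  · -- range
    apply Set.Subset.antisymm
    · rintro _ ⟨f, rfl⟩; exact hmem f
    · intro g hg
      have hg' := hg
      rw [hIndσ] at hg'
      obtain ⟨hcont, heq, φ, hφ, hφ0⟩ := hg'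
      have hresp : ∀ a b : G, (QuotientGroup.leftRel H).r a b → g (b⁻¹, 1) = g (a⁻¹, 1) := by
        intro a b hab
        rw [QuotientGroup.leftRel_apply] at hab
        have hb : b = a * (a⁻¹ * b) := by group
        calc g (b⁻¹, 1) = g ((a⁻¹ * b)⁻¹ * a⁻¹, 1 * 1) := by
              rw [one_mul, ← mul_inv_rev, ← hb]
          _ = α 1 (g (a⁻¹, 1)) := heq _ (H.inv_mem hab) a⁻¹ 1 1
          _ = g (a⁻¹, 1) := hα_one _
      set fbar : G ⧸ H → A := fun q => Quotient.liftOn' q (fun t => g (t⁻¹, 1))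
        (fun a b h => (hresp a b h).symm) with hfbar
      have hfbar_mk : ∀ t : G, fbar (QuotientGroup.mk t) = g (t⁻¹, 1) := fun t => rfl
      have hcont' : Continuous fbar := by
        apply Continuous.quotient_liftOn'
        exact hcont.comp ((continuous_inv).prodMk continuous_const)
      have hzero : Filter.Tendsto fbar (Filter.cocompact (G ⧸ H)) (nhds 0) := by
        rw [tendsto_zero_iff_norm_tendsto_zero]
        have : (fun q => ‖fbar q‖) = φ := by
          funext q
          obtain ⟨r, rfl⟩ := QuotientGroup.mk_surjective q
          rw [hfbar_mk, hφ]
        rw [this]; exact hφ0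
      set f : C₀(G ⧸ H, A) := ⟨⟨fbar, hcont'⟩, hzero⟩ with hf
      exact ⟨f, key g hg f fun t => hfbar_mk t⟩
  · intro f g
    funext p
    rw [hΩ]
    simp only [Pi.add_apply, hΩ, ZeroAtInftyContinuousMap.coe_add, Pi.add_apply, map_add]
  · intro c f
    funext p
    rw [hΩ]
    simp only [Pi.smul_apply, hΩ, ZeroAtInftyContinuousMap.coe_smul, Pi.smul_apply, map_smul]
  · intro f g
    funext p
    rw [hΩ]
    simp only [Pi.mul_apply, hΩ, ZeroAtInftyContinuousMap.coe_mul, Pi.mul_apply, map_mul]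
  · intro f
    funext p
    rw [hΩ]
    simp only [Pi.star_apply, hΩ, ZeroAtInftyContinuousMap.coe_star, Pi.star_apply, map_star]
  · intro t f f' hff p
    obtain ⟨r, s⟩ := p
    rw [hΩ, hΩ]
    simp only
    rw [hff r⁻¹]
    have hq : QuotientGroup.mk (t⁻¹ * r⁻¹) = (QuotientGroup.mk ((r * t : G))⁻¹ : G ⧸ H) := by
      rw [mul_inv_rev]
    rw [hq, ← hα_mul]
end

section
/- Let π : A → B(𝓗) be a *-homomorphism into the bounded operators on a complex Hilbert space 𝓗. For g ∈ C_c(G × G, A) and ξ ∈ C_c(G × G, 𝓗), define (T_g ξ)(r,s) = ∫_G π(α_{r⁻¹}(g(t,s)))(ξ(t⁻¹r, t⁻¹s)) dt. Then T_g ξ ∈ C_c(G × G, 𝓗), and for all g₁, g₂ ∈ C_c(G × G, A) and ξ ∈ C_c(G × G, 𝓗) one has T_{g₁ * g₂} ξ = T_{g₁}(T_{g₂} ξ), where (g₁ * g₂)(t,s) = ∫_G g₁(u,s) α_u(g₂(u⁻¹t, u⁻¹s)) du. -/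
open MeasureTheory
open scoped CStarAlgebra Pointwise

section Aux

variable {A : Type*} [NonUnitalCStarAlgebra A]
  {𝓗 : Type*} [NormedAddCommGroup 𝓗] [InnerProductSpace ℂ 𝓗] [CompleteSpace 𝓗]

/-- Pull `v ↦ π (e a) v` (a continuous linear map in `a`) through a Bochner integral. -/
lemma aux_pi_integral (π : A →⋆ₙₐ[ℂ] (𝓗 →L[ℂ] 𝓗)) (e : A ≃⋆ₐ[ℂ] A) (v : 𝓗)
    {X : Type*} [MeasurableSpace X] (μ : Measure X) (h : X → A) (hint : Integrable h μ) :
    π (e (∫ x, h x ∂μ)) v = ∫ x, π (e (h x)) v ∂μ := by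
  let L : A →L[ℂ] 𝓗 := LinearMap.mkContinuous
    { toFun := fun a => π (e a) v
      map_add' := fun a b => by simp [map_add]
      map_smul' := fun c a => by simp }
    ‖v‖ (fun a => by
      calc ‖π (e a) v‖ ≤ ‖π (e a)‖ * ‖v‖ := (π (e a)).le_opNorm v
        _ ≤ ‖e a‖ * ‖v‖ := by
            gcongr
            exact NonUnitalStarAlgHom.norm_apply_le π (e a)
        _ = ‖a‖ * ‖v‖ := by rw [StarAlgEquiv.norm_map]
        _ = ‖v‖ * ‖a‖ := mul_comm _ _)
  exact (L.integral_comp_comm hint).symm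

end Aux

/-- For `g ∈ C_c(G × G, A)` the operator `(T_g ξ)(r,s) = ∫_G π(α_{r⁻¹}(g(t,s)))(ξ(t⁻¹r, t⁻¹s)) dt`
maps `C_c(G × G, 𝓗)` to itself, and `T_{g₁ * g₂} = T_{g₁} ∘ T_{g₂}` where `*` is the
twisted convolution `(g₁ * g₂)(t,s) = ∫_G g₁(u,s) α_u(g₂(u⁻¹t, u⁻¹s)) du`. -/
theorem stmt_13 {G : Type*} [Group G] [TopologicalSpace G] [IsTopologicalGroup G]
    [LocallyCompactSpace G] [T2Space G] [MeasurableSpace G] [BorelSpace G]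
    (μ : Measure G) [μ.IsHaarMeasure]
    {A : Type*} [NonUnitalCStarAlgebra A]
    (α : G → A ≃⋆ₐ[ℂ] A) (hα_one : ∀ a : A, α 1 a = a)
    (hα_mul : ∀ s t : G, ∀ a : A, α (s * t) a = α s (α t a))
    (hα_cont : Continuous fun p : G × A => α p.1 p.2)
    {𝓗 : Type*} [NormedAddCommGroup 𝓗] [InnerProductSpace ℂ 𝓗] [CompleteSpace 𝓗]
    (π : A →⋆ₙₐ[ℂ] (𝓗 →L[ℂ] 𝓗))
    (T : (G × G → A) → (G × G → 𝓗) → (G × G → 𝓗))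
    (hT : ∀ (g : G × G → A) (ξ : G × G → 𝓗) (p : G × G),
      T g ξ p = ∫ t, π (α p.1⁻¹ (g (t, p.2))) (ξ (t⁻¹ * p.1, t⁻¹ * p.2)) ∂μ)
    (conv : (G × G → A) → (G × G → A) → (G × G → A))
    (hconv : ∀ (g₁ g₂ : G × G → A) (p : G × G),
      conv g₁ g₂ p = ∫ u, g₁ (u, p.2) * α u (g₂ (u⁻¹ * p.1, u⁻¹ * p.2)) ∂μ) :
    (∀ (g : G × G → A) (ξ : G × G → 𝓗), Continuous g → HasCompactSupport g →
      Continuous ξ → HasCompactSupport ξ →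
      Continuous (T g ξ) ∧ HasCompactSupport (T g ξ)) ∧
    (∀ (g₁ g₂ : G × G → A) (ξ : G × G → 𝓗), Continuous g₁ → HasCompactSupport g₁ →
      Continuous g₂ → HasCompactSupport g₂ → Continuous ξ → HasCompactSupport ξ →
      T (conv g₁ g₂) ξ = T g₁ (T g₂ ξ)) := by
  have hπc : Continuous π := map_continuous π
  have happly : Continuous fun q : (𝓗 →L[ℂ] 𝓗) × 𝓗 => q.1 q.2 :=
    isBoundedBilinearMap_apply.continuous
  -- Part 1
  have main : ∀ (g : G × G → A) (ξ : G × G → 𝓗), Continuous g → HasCompactSupport g →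
      Continuous ξ → HasCompactSupport ξ →
      Continuous (T g ξ) ∧ HasCompactSupport (T g ξ) := by
    intro g ξ hg hgc hξ hξc
    set k : Set G := Prod.fst '' tsupport g with hk_def
    have hk : IsCompact k := hgc.image continuous_fst
    have hgz : ∀ (t s : G), t ∉ k → g (t, s) = 0 := by
      intro t s ht
      by_contra h
      exact ht ⟨(t, s), subset_tsupport _ h, rfl⟩
    have hfc : Continuous fun q : (G × G) × G =>
        π (α q.1.1⁻¹ (g (q.2, q.1.2))) (ξ (q.2⁻¹ * q.1.1, q.2⁻¹ * q.1.2)) := by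
      exact happly.comp ((hπc.comp (hα_cont.comp ((continuous_fst.fst.inv).prodMk
          (hg.comp (continuous_snd.prodMk continuous_fst.snd))))).prodMk
        (hξ.comp (((continuous_snd.inv).mul continuous_fst.fst).prodMk
          ((continuous_snd.inv).mul continuous_fst.snd))))
    have hTg : T g ξ = fun p => ∫ t, π (α p.1⁻¹ (g (t, p.2))) (ξ (t⁻¹ * p.1, t⁻¹ * p.2)) ∂μ :=
      funext (hT g ξ)
    have hzero : ∀ (p : G × G) (t : G), t ∉ k →
        π (α p.1⁻¹ (g (t, p.2))) (ξ (t⁻¹ * p.1, t⁻¹ * p.2)) = 0 := by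
      intro p t ht
      rw [hgz t p.2 ht]
      simp
    constructor
    · rw [hTg, ← continuousOn_univ]
      exact continuousOn_integral_of_compact_support (μ := μ) hk
        (by exact hfc.continuousOn) (fun p t _ ht => hzero p t ht)
    · apply HasCompactSupport.intro
        ((hk.mul (hξc.image continuous_fst)).prod (hgc.image continuous_snd))
      intro p hp
      rw [hT g ξ p]
      have hzero' : ∀ t : G, π (α p.1⁻¹ (g (t, p.2))) (ξ (t⁻¹ * p.1, t⁻¹ * p.2)) = 0 := by
        intro t
        by_cases hgt : g (t, p.2) = 0
        · rw [hgt]; simp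
        · have htk : t ∈ k := ⟨(t, p.2), subset_tsupport _ hgt, rfl⟩
          have hp2 : p.2 ∈ Prod.snd '' tsupport g :=
            ⟨(t, p.2), subset_tsupport _ hgt, rfl⟩
          have hp1 : p.1 ∉ k * (Prod.fst '' tsupport ξ) := by
            intro h
            exact hp (Set.mk_mem_prod h hp2)
          have hξz : ξ (t⁻¹ * p.1, t⁻¹ * p.2) = 0 := by
            by_contra h
            apply hp1
            have : t⁻¹ * p.1 ∈ Prod.fst '' tsupport ξ :=
              ⟨(t⁻¹ * p.1, t⁻¹ * p.2), subset_tsupport _ h, rfl⟩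
            have := Set.mul_mem_mul htk this
            simpa using this
          rw [hξz]
          simp
      simp [hzero']
  refine ⟨main, ?_⟩
  -- Part 2
  intro g₁ g₂ ξ hg₁ hg₁c hg₂ hg₂c hξ hξc
  set K₁ : Set G := Prod.fst '' tsupport g₁ with hK₁_def
  have hK₁ : IsCompact K₁ := hg₁c.image continuous_fst
  have hg₁z : ∀ (t s : G), t ∉ K₁ → g₁ (t, s) = 0 := by
    intro t s ht; by_contra h; exact ht ⟨(t, s), subset_tsupport _ h, rfl⟩
  set K₂ : Set G := Prod.fst '' tsupport g₂ with hK₂_def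
  have hK₂ : IsCompact K₂ := hg₂c.image continuous_fst
  have hg₂z : ∀ (t s : G), t ∉ K₂ → g₂ (t, s) = 0 := by
    intro t s ht; by_contra h; exact ht ⟨(t, s), subset_tsupport _ h, rfl⟩
  funext p
  obtain ⟨r, s⟩ := p
  -- integrability of the convolution integrand
  have hhint : ∀ t : G, Integrable (fun u => g₁ (u, s) * α u (g₂ (u⁻¹ * t, u⁻¹ * s))) μ := by
    intro t
    have hc : Continuous fun u => g₁ (u, s) * α u (g₂ (u⁻¹ * t, u⁻¹ * s)) := by
      apply Continuous.mul
      · exact hg₁.comp (continuous_id.prodMk continuous_const)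
      · exact hα_cont.comp (continuous_id.prodMk (hg₂.comp
          ((continuous_inv.mul continuous_const).prodMk
            (continuous_inv.mul continuous_const))))
    exact hc.integrable_of_hasCompactSupport
      (HasCompactSupport.intro hK₁ fun u hu => by rw [hg₁z u s hu, zero_mul])
  -- inner integrability for the last pull-out step
  have hint2 : ∀ u : G, Integrable (fun t =>
      π (α (u⁻¹ * r)⁻¹ (g₂ (t, u⁻¹ * s))) (ξ (t⁻¹ * (u⁻¹ * r), t⁻¹ * (u⁻¹ * s)))) μ := by
    intro u
    have hc : Continuous fun t =>
        π (α (u⁻¹ * r)⁻¹ (g₂ (t, u⁻¹ * s))) (ξ (t⁻¹ * (u⁻¹ * r), t⁻¹ * (u⁻¹ * s))) := by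
      exact happly.comp ((hπc.comp (hα_cont.comp (continuous_const.prodMk
          (hg₂.comp (continuous_id.prodMk continuous_const))))).prodMk
        (hξ.comp ((continuous_inv.mul continuous_const).prodMk
          (continuous_inv.mul continuous_const))))
    exact hc.integrable_of_hasCompactSupport
      (HasCompactSupport.intro hK₂ fun t ht => by rw [hg₂z t (u⁻¹ * s) ht]; simp)
  calc T (conv g₁ g₂) ξ (r, s)
      = ∫ t, π (α r⁻¹ (∫ u, g₁ (u, s) * α u (g₂ (u⁻¹ * t, u⁻¹ * s)) ∂μ))
          (ξ (t⁻¹ * r, t⁻¹ * s)) ∂μ := by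
        rw [hT]
        simp only [hconv]
    _ = ∫ t, ∫ u, π (α r⁻¹ (g₁ (u, s) * α u (g₂ (u⁻¹ * t, u⁻¹ * s))))
          (ξ (t⁻¹ * r, t⁻¹ * s)) ∂μ ∂μ := by
        refine integral_congr_ae (Filter.Eventually.of_forall fun t => ?_)
        exact aux_pi_integral π (α r⁻¹) (ξ (t⁻¹ * r, t⁻¹ * s)) μ _ (hhint t)
    _ = ∫ t, ∫ u, π (α r⁻¹ (g₁ (u, s)))
          (π (α (u⁻¹ * r)⁻¹ (g₂ (u⁻¹ * t, u⁻¹ * s))) (ξ (t⁻¹ * r, t⁻¹ * s))) ∂μ ∂μ := by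
        refine integral_congr_ae (Filter.Eventually.of_forall fun t => ?_)
        refine integral_congr_ae (Filter.Eventually.of_forall fun u => ?_)
        have h1 : α r⁻¹ (α u (g₂ (u⁻¹ * t, u⁻¹ * s)))
            = α (u⁻¹ * r)⁻¹ (g₂ (u⁻¹ * t, u⁻¹ * s)) := by
          rw [← hα_mul]
          congr 1
          group
        beta_reduce
        rw [map_mul (α r⁻¹) (g₁ (u, s)) (α u (g₂ (u⁻¹ * t, u⁻¹ * s))), map_mul π, ContinuousLinearMap.mul_apply, h1]
    _ = ∫ u, ∫ t, π (α r⁻¹ (g₁ (u, s)))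
          (π (α (u⁻¹ * r)⁻¹ (g₂ (u⁻¹ * t, u⁻¹ * s))) (ξ (t⁻¹ * r, t⁻¹ * s))) ∂μ ∂μ := by
        apply integral_integral_swap_of_hasCompactSupport
        · exact happly.comp ((hπc.comp (hα_cont.comp (continuous_const.prodMk
              (hg₁.comp (continuous_snd.prodMk continuous_const))))).prodMk
            (happly.comp ((hπc.comp (hα_cont.comp
                (((continuous_snd.inv.mul continuous_const).inv).prodMk
                  (hg₂.comp ((continuous_snd.inv.mul continuous_fst).prodMk
                    (continuous_snd.inv.mul continuous_const)))))).prodMk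
              (hξ.comp ((continuous_fst.inv.mul continuous_const).prodMk
                (continuous_fst.inv.mul continuous_const))))))
        · apply HasCompactSupport.intro ((hK₁.mul hK₂).prod hK₁)
          rintro ⟨t, u⟩ hq
          by_cases hu : u ∈ K₁
          · have ht : t ∉ K₁ * K₂ := fun h => hq (Set.mk_mem_prod h hu)
            have h2 : g₂ (u⁻¹ * t, u⁻¹ * s) = 0 := by
              apply hg₂z
              intro h
              apply ht
              have := Set.mul_mem_mul hu h
              simpa using this
            simp [Function.uncurry, h2]
          · have h1 : g₁ (u, s) = 0 := hg₁z u s hu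
            simp [Function.uncurry, h1]
    _ = ∫ u, π (α r⁻¹ (g₁ (u, s)))
          (∫ t, π (α (u⁻¹ * r)⁻¹ (g₂ (t, u⁻¹ * s)))
            (ξ (t⁻¹ * (u⁻¹ * r), t⁻¹ * (u⁻¹ * s))) ∂μ) ∂μ := by
        refine integral_congr_ae (Filter.Eventually.of_forall fun u => ?_)
        calc (∫ t, π (α r⁻¹ (g₁ (u, s)))
                (π (α (u⁻¹ * r)⁻¹ (g₂ (u⁻¹ * t, u⁻¹ * s))) (ξ (t⁻¹ * r, t⁻¹ * s))) ∂μ)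
            = ∫ t, π (α r⁻¹ (g₁ (u, s)))
                (π (α (u⁻¹ * r)⁻¹ (g₂ (u⁻¹ * (u * t), u⁻¹ * s)))
                  (ξ ((u * t)⁻¹ * r, (u * t)⁻¹ * s))) ∂μ :=
              (integral_mul_left_eq_self (fun t => π (α r⁻¹ (g₁ (u, s)))
                (π (α (u⁻¹ * r)⁻¹ (g₂ (u⁻¹ * t, u⁻¹ * s))) (ξ (t⁻¹ * r, t⁻¹ * s)))) u).symm
          _ = ∫ t, π (α r⁻¹ (g₁ (u, s)))
                (π (α (u⁻¹ * r)⁻¹ (g₂ (t, u⁻¹ * s)))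
                  (ξ (t⁻¹ * (u⁻¹ * r), t⁻¹ * (u⁻¹ * s)))) ∂μ := by
              refine integral_congr_ae (Filter.Eventually.of_forall fun t => ?_)
              beta_reduce
              rw [inv_mul_cancel_left, show (u * t)⁻¹ * r = t⁻¹ * (u⁻¹ * r) by group,
                show (u * t)⁻¹ * s = t⁻¹ * (u⁻¹ * s) by group]
          _ = π (α r⁻¹ (g₁ (u, s)))
                (∫ t, π (α (u⁻¹ * r)⁻¹ (g₂ (t, u⁻¹ * s)))
                  (ξ (t⁻¹ * (u⁻¹ * r), t⁻¹ * (u⁻¹ * s))) ∂μ) :=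
              ContinuousLinearMap.integral_comp_comm _ (hint2 u)
    _ = ∫ u, π (α r⁻¹ (g₁ (u, s))) (T g₂ ξ (u⁻¹ * r, u⁻¹ * s)) ∂μ := by
        refine integral_congr_ae (Filter.Eventually.of_forall fun u => ?_)
        beta_reduce
        rw [hT g₂ ξ (u⁻¹ * r, u⁻¹ * s)]
    _ = T g₁ (T g₂ ξ) (r, s) := (hT g₁ (T g₂ ξ) (r, s)).symm
end

section
/- For g ∈ C_c(H × G × G, A) and f ∈ C_c(G × G, A), the function G × G → A defined by (r,s) ↦ ∫_G ∫_H g(k,u,s) α_u(f(u⁻¹r, u⁻¹sk)) Δ_H(k)^{1/2} dk du (inner Bochner integral over H with respect to left Haar measure on H, outer over G with respect to left Haar measure on G) is well defined, continuous, and compactly supported, i.e. belongs to C_c(G × G, A). -/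
open MeasureTheory Filter Topology Set

/-- Continuity of a parametric integral when the integrand is jointly continuous and
vanishes, for parameters in a neighbourhood `L` of `x₀`, outside a fixed compact set `K`. -/
lemma paramCont {α X E : Type*} [TopologicalSpace α] [MeasurableSpace α] [T2Space α]
    [OpensMeasurableSpace α] [TopologicalSpace X] [NormedAddCommGroup E] [NormedSpace ℝ E]
    [CompleteSpace E] (μ : Measure α) [IsFiniteMeasureOnCompacts μ]
    (φ : α × X → E) (hφ : Continuous φ) {K : Set α} (hK : IsCompact K)
    {x₀ : X} {L : Set X} (hL : L ∈ 𝓝 x₀)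
    (hsupp : ∀ x ∈ L, ∀ a, a ∉ K → φ (a, x) = 0) :
    ContinuousAt (fun x => ∫ a, φ (a, x) ∂μ) x₀ := by
  have hx₀L : x₀ ∈ L := mem_of_mem_nhds hL
  have hint : ∀ x ∈ L, Integrable (fun a => φ (a, x)) μ := by
    intro x hx
    refine Continuous.integrable_of_hasCompactSupport (by fun_prop) ?_
    exact HasCompactSupport.intro hK (fun a ha => hsupp x hx a ha)
  have hTU : TendstoUniformlyOn (fun x a => φ (a, x)) (fun a => φ (a, x₀)) (𝓝 x₀) K := by
    set Φc : C(X × α, E) := ⟨fun p => φ (p.2, p.1), by fun_prop⟩ with hΦc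
    have h := (Φc.curry.continuous.tendsto x₀)
    exact ContinuousMap.tendsto_iff_forall_isCompact_tendstoUniformlyOn.mp h K hK
  rw [ContinuousAt, Metric.tendsto_nhds]
  intro ε hε
  have hμK : (0:ℝ) ≤ (μ K).toReal := ENNReal.toReal_nonneg
  set δ := ε / ((μ K).toReal + 1) with hδdef
  have hδ : 0 < δ := div_pos hε (by linarith)
  filter_upwards [Metric.tendstoUniformlyOn_iff.mp hTU δ hδ, hL] with x hx hxL
  have hbound : ∀ a, ‖φ (a, x) - φ (a, x₀)‖ ≤ K.indicator (fun _ => δ) a := by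
    intro a
    by_cases ha : a ∈ K
    · rw [Set.indicator_of_mem ha]
      have h1 := hx a ha
      rw [dist_eq_norm] at h1
      have h2 : ‖φ (a, x₀) - φ (a, x)‖ ≤ δ := le_of_lt h1
      rwa [norm_sub_rev] at h2
    · rw [Set.indicator_of_notMem ha, hsupp x hxL a ha, hsupp x₀ hx₀L a ha, sub_zero,
        norm_zero]
  have hKi : Integrable (K.indicator (fun _ => δ)) μ := by
    rw [integrable_indicator_iff hK.measurableSet]
    exact integrableOn_const hK.measure_lt_top.ne
  have key : ‖(∫ a, φ (a, x) ∂μ) - ∫ a, φ (a, x₀) ∂μ‖ ≤ (μ K).toReal * δ := by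
    rw [← integral_sub (hint x hxL) (hint x₀ hx₀L)]
    calc ‖∫ a, (φ (a, x) - φ (a, x₀)) ∂μ‖ ≤ ∫ a, K.indicator (fun _ => δ) a ∂μ :=
          norm_integral_le_of_norm_le hKi (Filter.Eventually.of_forall hbound)
      _ = (μ K).toReal * δ := by
          rw [integral_indicator_const _ hK.measurableSet, smul_eq_mul, measureReal_def]
  rw [dist_eq_norm]
  calc ‖(∫ a, φ (a, x) ∂μ) - ∫ a, φ (a, x₀) ∂μ‖ ≤ (μ K).toReal * δ := key
    _ < ((μ K).toReal + 1) * δ := by nlinarith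
    _ = ε := by
        rw [hδdef, mul_div_cancel₀ _ (by linarith : (μ K).toReal + 1 ≠ 0)]

/-- For `g ∈ C_c(H × G × G, A)` and `f ∈ C_c(G × G, A)` the function
`(r,s) ↦ ∫_G ∫_H g(k,u,s) α_u(f(u⁻¹r, u⁻¹sk)) Δ_H(k)^{1/2} dk du` belongs to
`C_c(G × G, A)`. -/
theorem stmt_15 {G : Type*} [Group G] [TopologicalSpace G] [IsTopologicalGroup G]
    [LocallyCompactSpace G] [T2Space G] [MeasurableSpace G] [BorelSpace G]
    (μ : Measure G) [μ.IsHaarMeasure]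
    (H : Subgroup G) (hH : IsClosed (H : Set G))
    (ν : Measure ↥H) [ν.IsHaarMeasure]
    (ΔH : ↥H → ℝ) (hΔH_pos : ∀ h, 0 < ΔH h)
    (hΔH : ∀ f : ↥H → ℝ, Continuous f → HasCompactSupport f →
      ∀ h : ↥H, ∫ k, f (k * h) ∂ν = (ΔH h)⁻¹ * ∫ k, f k ∂ν)
    {A : Type*} [NonUnitalCStarAlgebra A]
    (α : G → A ≃⋆ₐ[ℂ] A) (hα_one : ∀ a : A, α 1 a = a)
    (hα_mul : ∀ s t : G, ∀ a : A, α (s * t) a = α s (α t a))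
    (hα_cont : Continuous fun p : G × A => α p.1 p.2)
    (g : ↥H × G × G → A) (hg_cont : Continuous g) (hg_supp : HasCompactSupport g)
    (f : G × G → A) (hf_cont : Continuous f) (hf_supp : HasCompactSupport f)
    (F : G × G → A)
    (hF : ∀ (r s : G), F (r, s) =
      ∫ u, ∫ k, Real.sqrt (ΔH k) •
        (g (k, u, s) * α u (f (u⁻¹ * r, u⁻¹ * s * (k : G)))) ∂ν ∂μ) :
    Continuous F ∧ HasCompactSupport F := by
  haveI : LocallyCompactSpace ↥H := hH.locallyCompactSpace
  haveI : OpensMeasurableSpace ↥H := Subtype.opensMeasurableSpace (H : Set G)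
  -- Step 1: the modular function is continuous.
  obtain ⟨f₀, f₀_comp, f₀_nonneg, f₀_pos⟩ := exists_continuous_nonneg_pos (1 : ↥H)
  set c : ℝ := ∫ k, f₀ k ∂ν with hc_def
  have hc : 0 < c :=
    f₀.continuous.integral_pos_of_hasCompactSupport_nonneg_nonzero f₀_comp f₀_nonneg f₀_pos
  set T : ↥H → ℝ := fun h => ∫ k, f₀ (k * h) ∂ν with hT_def
  have hT_val : ∀ h, T h = (ΔH h)⁻¹ * c := fun h => hΔH f₀ f₀.continuous f₀_comp h
  have hT_pos : ∀ h, 0 < T h := fun h => by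
    rw [hT_val h]; exact mul_pos (inv_pos.2 (hΔH_pos h)) hc
  have hT_cont : Continuous T := by
    rw [continuous_iff_continuousAt]
    intro h₀
    obtain ⟨L, hLc, hLn⟩ := exists_compact_mem_nhds h₀
    refine paramCont ν (fun p : ↥H × ↥H => f₀ (p.1 * p.2))
      (f₀.continuous.comp (continuous_fst.mul continuous_snd))
      (f₀_comp.mul hLc.inv) hLn ?_
    intro h hh k hk
    by_contra hne
    apply hk
    have hm : k * h ∈ tsupport f₀ := subset_tsupport _ hne
    exact ⟨k * h, hm, h⁻¹, Set.inv_mem_inv.mpr hh, mul_inv_cancel_right k h⟩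
  have hΔ_eq : ∀ h, ΔH h = c / T h := by
    intro h
    rw [eq_div_iff (hT_pos h).ne', hT_val h, ← mul_assoc,
      mul_inv_cancel₀ (hΔH_pos h).ne', one_mul]
  have hΔ_cont : Continuous ΔH := by
    have : Continuous fun h => c / T h := continuous_const.div hT_cont fun h => (hT_pos h).ne'
    exact this.congr fun h => (hΔ_eq h).symm
  have hsΔ : Continuous fun k : ↥H => Real.sqrt (ΔH k) := Real.continuous_sqrt.comp hΔ_cont
  -- Step 2: the full integrand.
  set Φ : ↥H × (G × G × G) → A := fun p =>
    Real.sqrt (ΔH p.1) •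
      (g (p.1, p.2.1, p.2.2.2) *
        α p.2.1 (f (p.2.1⁻¹ * p.2.2.1, p.2.1⁻¹ * p.2.2.2 * (p.1 : G)))) with hΦ_def
  have hΦ_cont : Continuous Φ := by
    have h1 : Continuous fun p : ↥H × (G × G × G) =>
        f (p.2.1⁻¹ * p.2.2.1, p.2.1⁻¹ * p.2.2.2 * (p.1 : G)) := hf_cont.comp (by fun_prop)
    have h2 : Continuous fun p : ↥H × (G × G × G) =>
        α p.2.1 (f (p.2.1⁻¹ * p.2.2.1, p.2.1⁻¹ * p.2.2.2 * (p.1 : G))) :=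
      hα_cont.comp ((by fun_prop : Continuous fun p : ↥H × (G × G × G) => p.2.1).prodMk h1)
    have h3 : Continuous fun p : ↥H × (G × G × G) => g (p.1, p.2.1, p.2.2.2) :=
      hg_cont.comp (by fun_prop)
    exact (hsΔ.comp continuous_fst).smul (h3.mul h2)
  set K_H : Set ↥H := Prod.fst '' tsupport g with hK_H_def
  have hK_H : IsCompact K_H := hg_supp.image continuous_fst
  have hΦ_supp : ∀ x : G × G × G, ∀ k, k ∉ K_H → Φ (k, x) = 0 := by
    intro x k hk
    have hg0 : g (k, x.1, x.2.2) = 0 := by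
      by_contra hne
      exact hk ⟨(k, x.1, x.2.2), subset_tsupport g hne, rfl⟩
    simp only [hΦ_def, hg0, zero_mul, smul_zero]
  -- Step 3: the inner integral.
  set I : G × G × G → A := fun x => ∫ k, Φ (k, x) ∂ν with hI_def
  have hI_cont : Continuous I := by
    rw [continuous_iff_continuousAt]
    intro x₀
    exact paramCont ν Φ hΦ_cont hK_H univ_mem fun x _ k hk => hΦ_supp x k hk
  set K_G : Set G := (fun p : ↥H × G × G => p.2.1) '' tsupport g with hK_G_def
  have hK_G : IsCompact K_G := hg_supp.image (by fun_prop)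
  have hI_supp : ∀ q : G × G, ∀ u, u ∉ K_G → I (u, q) = 0 := by
    intro q u hu
    have h0 : ∀ k : ↥H, Φ (k, (u, q)) = 0 := by
      intro k
      have hg0 : g (k, u, q.2) = 0 := by
        by_contra hne
        exact hu ⟨(k, u, q.2), subset_tsupport g hne, rfl⟩
      simp only [hΦ_def, hg0, zero_mul, smul_zero]
    simp only [hI_def]
    rw [show (fun k => Φ (k, (u, q))) = fun _ => (0 : A) from funext h0, integral_zero]
  -- Step 4: the outer integral.
  have hF_eq : F = fun q : G × G => ∫ u, I (u, q) ∂μ := by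
    funext q
    obtain ⟨r, s⟩ := q
    rw [hF r s]
  have hF_cont : Continuous F := by
    rw [hF_eq, continuous_iff_continuousAt]
    intro q₀
    exact paramCont μ I hI_cont hK_G univ_mem fun q _ u hu => hI_supp q u hu
  refine ⟨hF_cont, ?_⟩
  -- Step 5: compact support.
  set K_f1 : Set G := Prod.fst '' tsupport f with hK_f1_def
  have hK_f1 : IsCompact K_f1 := hf_supp.image continuous_fst
  set K_s : Set G := (fun p : ↥H × G × G => p.2.2) '' tsupport g with hK_s_def
  have hK_s : IsCompact K_s := hg_supp.image (by fun_prop)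
  refine HasCompactSupport.intro ((hK_G.mul hK_f1).prod hK_s) ?_
  rintro ⟨r, s⟩ hq
  have hΦ0 : ∀ u : G, ∀ k : ↥H, Φ (k, (u, r, s)) = 0 := by
    intro u k
    rw [Set.mem_prod, not_and_or] at hq
    rcases hq with hr | hs
    · by_cases hg0 : g (k, u, s) = 0
      · simp only [hΦ_def, hg0, zero_mul, smul_zero]
      · have hu : u ∈ K_G := ⟨(k, u, s), subset_tsupport g hg0, rfl⟩
        have hf0 : f (u⁻¹ * r, u⁻¹ * s * (k : G)) = 0 := by
          by_contra hne
          exact hr ⟨u, hu, u⁻¹ * r, ⟨(u⁻¹ * r, u⁻¹ * s * (k : G)), subset_tsupport f hne, rfl⟩,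
            by group⟩
        simp only [hΦ_def, hf0, map_zero, mul_zero, smul_zero]
    · have hg0 : g (k, u, s) = 0 := by
        by_contra hne
        exact hs ⟨(k, u, s), subset_tsupport g hne, rfl⟩
      simp only [hΦ_def, hg0, zero_mul, smul_zero]
  have hI0 : ∀ u : G, I (u, r, s) = 0 := by
    intro u
    simp only [hI_def]
    rw [show (fun k => Φ (k, (u, r, s))) = fun _ => (0 : A) from funext (hΦ0 u), integral_zero]
  rw [hF_eq]
  simp only
  rw [show (fun u => I (u, (r, s))) = fun _ => (0 : A) from funext hI0, integral_zero]
end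

section
/- For x, y ∈ C_c(G × G, A), the function F : G × G → A defined by F(r,s) = ∫_G ∫_H α_t( x(t⁻¹, t⁻¹sh)* y(t⁻¹r, t⁻¹sh) ) Δ_G(t)⁻¹ dh dt is well defined and continuous, satisfies F(r, sh₀) = F(r, s) for all h₀ ∈ H and r, s ∈ G, and there exist compact sets C, D ⊆ G such that F(r,s) = 0 unless r ∈ C and s ∈ D·H. -/
open MeasureTheory Pointwise

open Topology Filter Set in
theorem aux_contAt_stmt16 {X Y E : Type*} [TopologicalSpace X]
    [TopologicalSpace Y] [T2Space Y] [MeasurableSpace Y] [OpensMeasurableSpace Y]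
    [NormedAddCommGroup E] [NormedSpace ℝ E]
    (μ : Measure Y) [IsFiniteMeasureOnCompacts μ]
    (ψ : X → Y → E) (hψ : Continuous fun p : X × Y => ψ p.1 p.2)
    (x₀ : X) (W : Set X) (hW : W ∈ 𝓝 x₀)
    (T : Set Y) (hT : IsCompact T)
    (h0 : ∀ x ∈ W, ∀ y, y ∉ T → ψ x y = 0) :
    ContinuousAt (fun x => ∫ y, ψ x y ∂μ) x₀ := by
  have hx₀W : x₀ ∈ W := mem_of_mem_nhds hW
  have hsupp : ∀ x ∈ W, HasCompactSupport (ψ x) := fun x hx =>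
    HasCompactSupport.intro hT (h0 x hx)
  have hcont : ∀ x, Continuous (ψ x) := fun x => hψ.comp (Continuous.prodMk_right x)
  have hint : ∀ x ∈ W, Integrable (ψ x) μ := fun x hx =>
    (hcont x).integrable_of_hasCompactSupport (hsupp x hx)
  have hunif : TendstoUniformlyOn (fun x y => ψ x y) (ψ x₀) (𝓝 x₀) T := by
    have h1 : Continuous fun x => (ContinuousMap.mk _ hψ).curry x :=
      (ContinuousMap.mk _ hψ).curry.continuous
    have h2 := ContinuousMap.tendsto_iff_forall_isCompact_tendstoUniformlyOn.1
      (h1.tendsto x₀) T hT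
    exact h2
  rw [ContinuousAt, Metric.tendsto_nhds]
  intro ε hε
  set c : ℝ := (μ T).toReal + 1 with hc
  have hc0 : (0:ℝ) < c := by positivity
  have hδ : 0 < ε / c := by positivity
  filter_upwards [Metric.tendstoUniformlyOn_iff.1 hunif (ε / c) hδ, hW] with p hp hpW
  rw [dist_eq_norm]
  have heq : (∫ y, ψ p y ∂μ) - (∫ y, ψ x₀ y ∂μ) = ∫ y, (ψ p y - ψ x₀ y) ∂μ :=
    (integral_sub (hint p hpW) (hint x₀ hx₀W)).symm
  rw [heq]
  have hzero : ∀ y, y ∉ T → ψ p y - ψ x₀ y = 0 := fun y hy => by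
    rw [h0 p hpW y hy, h0 x₀ hx₀W y hy, sub_zero]
  rw [← MeasureTheory.setIntegral_eq_integral_of_forall_compl_eq_zero hzero]
  calc ‖∫ y in T, (ψ p y - ψ x₀ y) ∂μ‖ ≤ (ε / c) * (μ T).toReal := by
        apply norm_setIntegral_le_of_norm_le_const hT.measure_lt_top
        intro y hy
        rw [norm_sub_rev, ← dist_eq_norm]
        exact (hp y hy).le
    _ < ε := by
        have h1 : (μ T).toReal < c := by simp [hc]
        have h2 := mul_lt_mul_of_pos_left h1 hδ
        rwa [div_mul_cancel₀ ε hc0.ne'] at h2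

open Topology Filter Set in
theorem aux_modular_continuous_stmt16 {G : Type*} [Group G] [TopologicalSpace G]
    [IsTopologicalGroup G] [LocallyCompactSpace G] [T2Space G] [MeasurableSpace G] [BorelSpace G]
    (μ : Measure G) [μ.IsHaarMeasure]
    (ΔG : G → ℝ) (hΔG_pos : ∀ t, 0 < ΔG t)
    (hΔG : ∀ f : G → ℝ, Continuous f → HasCompactSupport f →
      ∀ t : G, ∫ s, f (s * t) ∂μ = (ΔG t)⁻¹ * ∫ s, f s ∂μ) :
    Continuous ΔG := by
  obtain ⟨K, hKc, hK1⟩ := exists_compact_mem_nhds (1 : G)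
  obtain ⟨f, hf1, -, hfc, hf01⟩ :=
    exists_continuous_one_zero_of_isCompact hKc isClosed_empty (by simp)
  have hfcont : Continuous f := f.continuous
  have hfpos : 0 < ∫ s, f s ∂μ := by
    rw [integral_pos_iff_support_of_nonneg (fun s => (hf01 s).1)
      (hfcont.integrable_of_hasCompactSupport hfc)]
    have h1 : interior K ⊆ Function.support f := fun z hz => by
      rw [Function.mem_support, hf1 (interior_subset hz)]
      norm_num
    exact (isOpen_interior.measure_pos μ
      ⟨1, mem_interior_iff_mem_nhds.2 hK1⟩).trans_le (measure_mono h1)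
  have hg : Continuous fun t => ∫ s, f (s * t) ∂μ := by
    rw [continuous_iff_continuousAt]
    intro t₀
    obtain ⟨V, hVc, hV⟩ := exists_compact_mem_nhds t₀
    refine aux_contAt_stmt16 μ (fun t s => f (s * t))
      (hfcont.comp (continuous_snd.mul continuous_fst)) t₀ V hV
      (tsupport f * V⁻¹) (hfc.mul hVc.inv) ?_
    intro t ht s hs
    by_contra hne
    refine hs ?_
    have h2 : s * t ∈ tsupport f := subset_tsupport f hne
    have h3 := Set.mul_mem_mul h2 (Set.inv_mem_inv.mpr ht)
    simpa [mul_assoc] using h3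
  have hgpos : ∀ t, (0:ℝ) < ∫ s, f (s * t) ∂μ := fun t => by
    rw [hΔG f hfcont hfc t]
    exact mul_pos (inv_pos.2 (hΔG_pos t)) hfpos
  have key : ∀ t, ΔG t = (∫ s, f s ∂μ) * (∫ s, f (s * t) ∂μ)⁻¹ := by
    intro t
    rw [hΔG f hfcont hfc t, mul_inv, inv_inv]
    field_simp
  rw [show ΔG = fun t => (∫ s, f s ∂μ) * (∫ s, f (s * t) ∂μ)⁻¹ from funext key]
  exact continuous_const.mul (hg.inv₀ fun t => (hgpos t).ne')

/-- For `x, y ∈ C_c(G × G, A)`, the function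
`F(r,s) = ∫_G ∫_H α_t(x(t⁻¹, t⁻¹sh)* y(t⁻¹r, t⁻¹sh)) Δ_G(t)⁻¹ dh dt` is continuous,
right-`H`-invariant in the second variable, and supported in a set of the form `C × (D·H)`
with `C, D` compact. -/
theorem stmt_16 {G : Type*} [Group G] [TopologicalSpace G] [IsTopologicalGroup G]
    [LocallyCompactSpace G] [T2Space G] [MeasurableSpace G] [BorelSpace G]
    (μ : Measure G) [μ.IsHaarMeasure]
    (H : Subgroup G) (hH : IsClosed (H : Set G))
    (ν : Measure ↥H) [ν.IsHaarMeasure]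
    (ΔG : G → ℝ) (hΔG_pos : ∀ t, 0 < ΔG t)
    (hΔG : ∀ f : G → ℝ, Continuous f → HasCompactSupport f →
      ∀ t : G, ∫ s, f (s * t) ∂μ = (ΔG t)⁻¹ * ∫ s, f s ∂μ)
    {A : Type*} [NonUnitalCStarAlgebra A]
    (α : G → A ≃⋆ₐ[ℂ] A) (hα_one : ∀ a : A, α 1 a = a)
    (hα_mul : ∀ s t : G, ∀ a : A, α (s * t) a = α s (α t a))
    (hα_cont : Continuous fun p : G × A => α p.1 p.2)
    (x y : G × G → A) (hx_cont : Continuous x) (hx_supp : HasCompactSupport x)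
    (hy_cont : Continuous y) (hy_supp : HasCompactSupport y)
    (F : G × G → A)
    (hF : ∀ (r s : G), F (r, s) =
      ∫ t, ∫ h, (ΔG t)⁻¹ •
        α t (star (x (t⁻¹, t⁻¹ * s * (h : G))) * y (t⁻¹ * r, t⁻¹ * s * (h : G))) ∂ν ∂μ) :
    Continuous F ∧
    (∀ h₀ ∈ H, ∀ r s : G, F (r, s * h₀) = F (r, s)) ∧
    ∃ C D : Set G, IsCompact C ∧ IsCompact D ∧
      ∀ r s : G, F (r, s) ≠ 0 → r ∈ C ∧ s ∈ D * (H : Set G) := by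
  have hΔc : Continuous ΔG := aux_modular_continuous_stmt16 μ ΔG hΔG_pos hΔG
  have hBH : BorelSpace ↥H := Subtype.borelSpace _
  have hval := hH.isClosedEmbedding_subtypeVal
  -- compact projections of the supports
  set K₁ : Set G := Prod.fst '' tsupport x with hK₁def
  set K₂ : Set G := Prod.snd '' tsupport x with hK₂def
  set L₁ : Set G := Prod.fst '' tsupport y with hL₁def
  have hK₁c : IsCompact K₁ := hx_supp.image continuous_fst
  have hK₂c : IsCompact K₂ := hx_supp.image continuous_snd
  have hL₁c : IsCompact L₁ := hy_supp.image continuous_fst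
  -- the inner integrand
  set Φ : (G × G × G) → ↥H → A := fun p h =>
    (ΔG p.2.2)⁻¹ • α p.2.2 (star (x (p.2.2⁻¹, p.2.2⁻¹ * p.2.1 * (h : G))) *
      y (p.2.2⁻¹ * p.1, p.2.2⁻¹ * p.2.1 * (h : G))) with hΦdef
  have hF' : ∀ r s : G, F (r, s) = ∫ t, ∫ h, Φ (r, s, t) h ∂ν ∂μ := hF
  -- joint continuity of Φ
  have hΦcont : Continuous fun q : (G × G × G) × ↥H => Φ q.1 q.2 := by
    have ht : Continuous fun q : (G × G × G) × ↥H => q.1.2.2 :=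
      (continuous_snd.comp continuous_snd).comp continuous_fst
    have hr : Continuous fun q : (G × G × G) × ↥H => q.1.1 :=
      continuous_fst.comp continuous_fst
    have hs : Continuous fun q : (G × G × G) × ↥H => q.1.2.1 :=
      (continuous_fst.comp continuous_snd).comp continuous_fst
    have hh : Continuous fun q : (G × G × G) × ↥H => (q.2 : G) :=
      continuous_subtype_val.comp continuous_snd
    have hc2 : Continuous fun q : (G × G × G) × ↥H => q.1.2.2⁻¹ * q.1.2.1 * (q.2 : G) :=
      ((ht.inv).mul hs).mul hh
    have hcx : Continuous fun q : (G × G × G) × ↥H =>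
        x (q.1.2.2⁻¹, q.1.2.2⁻¹ * q.1.2.1 * (q.2 : G)) :=
      hx_cont.comp ((ht.inv).prodMk hc2)
    have hcy : Continuous fun q : (G × G × G) × ↥H =>
        y (q.1.2.2⁻¹ * q.1.1, q.1.2.2⁻¹ * q.1.2.1 * (q.2 : G)) :=
      hy_cont.comp (((ht.inv).mul hr).prodMk hc2)
    have hcmul : Continuous fun q : (G × G × G) × ↥H =>
        star (x (q.1.2.2⁻¹, q.1.2.2⁻¹ * q.1.2.1 * (q.2 : G))) *
          y (q.1.2.2⁻¹ * q.1.1, q.1.2.2⁻¹ * q.1.2.1 * (q.2 : G)) :=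
      (hcx.star).mul hcy
    have hcα : Continuous fun q : (G × G × G) × ↥H =>
        α q.1.2.2 (star (x (q.1.2.2⁻¹, q.1.2.2⁻¹ * q.1.2.1 * (q.2 : G))) *
          y (q.1.2.2⁻¹ * q.1.1, q.1.2.2⁻¹ * q.1.2.1 * (q.2 : G))) :=
      hα_cont.comp (ht.prodMk hcmul)
    exact ((hΔc.comp ht).inv₀ fun q => (hΔG_pos _).ne').smul hcα
  -- continuity of the inner integral
  have hJcont : Continuous fun p : G × G × G => ∫ h, Φ p h ∂ν := by
    rw [continuous_iff_continuousAt]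
    intro p₀
    obtain ⟨W, hWc, hWn⟩ := exists_compact_mem_nhds p₀
    set S1 : Set G := (fun p : G × G × G => p.2.1) '' W with hS1def
    set T1 : Set G := (fun p : G × G × G => p.2.2) '' W with hT1def
    have hSc : IsCompact S1 := hWc.image (continuous_fst.comp continuous_snd)
    have hT'c : IsCompact T1 := hWc.image (continuous_snd.comp continuous_snd)
    refine aux_contAt_stmt16 ν Φ hΦcont p₀ W hWn
      (Subtype.val ⁻¹' (S1⁻¹ * (T1 * K₂)))
      (hval.isCompact_preimage ((hSc.inv).mul (hT'c.mul hK₂c))) ?_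
    intro p hp h hh
    have hx0 : x (p.2.2⁻¹, p.2.2⁻¹ * p.2.1 * (h : G)) = 0 := by
      by_contra hne
      refine hh ?_
      have hmem : (p.2.2⁻¹, p.2.2⁻¹ * p.2.1 * (h : G)) ∈ tsupport x := subset_tsupport x hne
      have h2 : p.2.2⁻¹ * p.2.1 * (h : G) ∈ K₂ := ⟨_, hmem, rfl⟩
      have h3 := Set.mul_mem_mul
        (Set.inv_mem_inv.mpr (show p.2.1 ∈ S1 from ⟨p, hp, rfl⟩))
        (Set.mul_mem_mul (show p.2.2 ∈ T1 from ⟨p, hp, rfl⟩) h2)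
      have heq : p.2.1⁻¹ * (p.2.2 * (p.2.2⁻¹ * p.2.1 * (h : G))) = (h : G) := by group
      rw [heq] at h3
      exact h3
    simp only [hΦdef, hx0, star_zero, zero_mul, map_zero, smul_zero]
  -- continuity of F
  have hFcont : Continuous F := by
    have hFrw : F = fun p : G × G => ∫ t, (fun q : G × G × G => ∫ h, Φ q h ∂ν) (p.1, p.2, t) ∂μ :=
      funext fun p => hF' p.1 p.2
    rw [hFrw, continuous_iff_continuousAt]
    intro p₀
    refine aux_contAt_stmt16 μ _
      (hJcont.comp (((continuous_fst.comp continuous_fst)).prodMk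
        ((continuous_snd.comp continuous_fst).prodMk continuous_snd)))
      p₀ Set.univ Filter.univ_mem K₁⁻¹ hK₁c.inv ?_
    intro rs _ t ht
    have hx0 : ∀ h : ↥H, Φ (rs.1, rs.2, t) h = 0 := by
      intro h
      have hxz : x (t⁻¹, t⁻¹ * rs.2 * (h : G)) = 0 := by
        by_contra hne
        exact ht (Set.mem_inv.mpr ⟨_, subset_tsupport x hne, rfl⟩)
      simp only [hΦdef, hxz, star_zero, zero_mul, map_zero, smul_zero]
    simp only [hx0, integral_zero]
  refine ⟨hFcont, ?_, ?_⟩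
  · -- right H-invariance in the second variable
    intro h₀ hh₀ r s
    rw [hF r (s * h₀), hF r s]
    have key : ∀ t : G,
        (∫ h : ↥H, (ΔG t)⁻¹ • α t (star (x (t⁻¹, t⁻¹ * (s * h₀) * (h : G))) *
          y (t⁻¹ * r, t⁻¹ * (s * h₀) * (h : G))) ∂ν)
        = ∫ h : ↥H, (ΔG t)⁻¹ • α t (star (x (t⁻¹, t⁻¹ * s * (h : G))) *
          y (t⁻¹ * r, t⁻¹ * s * (h : G))) ∂ν := by
      intro t
      have hmls := integral_mul_left_eq_self (μ := ν)
        (fun h : ↥H => (ΔG t)⁻¹ • α t (star (x (t⁻¹, t⁻¹ * s * (h : G))) *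
          y (t⁻¹ * r, t⁻¹ * s * (h : G)))) ⟨h₀, hh₀⟩
      rw [← hmls]
      congr 1
      funext h
      have hco : ((((⟨h₀, hh₀⟩ : ↥H) * h : ↥H)) : G) = h₀ * (h : G) := rfl
      have heq : t⁻¹ * (s * h₀) * (h : G) = t⁻¹ * s * (h₀ * (h : G)) := by group
      simp only [hco, heq]
    exact congrArg (fun f => ∫ t, f t ∂μ) (funext key)
  · -- support condition
    refine ⟨K₁⁻¹ * L₁, K₁⁻¹ * K₂, hK₁c.inv.mul hL₁c, hK₁c.inv.mul hK₂c, ?_⟩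
    intro r s hFne
    have key : ∃ t : G, ∃ h : ↥H,
        star (x (t⁻¹, t⁻¹ * s * (h : G))) * y (t⁻¹ * r, t⁻¹ * s * (h : G)) ≠ 0 := by
      by_contra hc
      push_neg at hc
      refine hFne ?_
      rw [hF r s]
      simp only [hc, map_zero, smul_zero, integral_zero]
    obtain ⟨t, h, hne⟩ := key
    have hxne : x (t⁻¹, t⁻¹ * s * (h : G)) ≠ 0 := fun h0 => hne (by rw [h0, star_zero, zero_mul])
    have hyne : y (t⁻¹ * r, t⁻¹ * s * (h : G)) ≠ 0 := fun h0 => hne (by rw [h0, mul_zero])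
    have htK₁ : t⁻¹ ∈ K₁ := ⟨_, subset_tsupport x hxne, rfl⟩
    have hrL₁ : t⁻¹ * r ∈ L₁ := ⟨_, subset_tsupport y hyne, rfl⟩
    have hsK₂ : t⁻¹ * s * (h : G) ∈ K₂ := ⟨_, subset_tsupport x hxne, rfl⟩
    constructor
    · have h3 := Set.mul_mem_mul (Set.mem_inv.mpr (by simpa using htK₁)) hrL₁
      rwa [mul_inv_cancel_left] at h3
    · have h3 := Set.mul_mem_mul
        (Set.mul_mem_mul (Set.mem_inv.mpr (by simpa using htK₁)) hsK₂)
        (show ((h : G))⁻¹ ∈ (H : Set G) from by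
          simpa using (inv_mem h.2 : (h : G)⁻¹ ∈ H))
      have heq : t * (t⁻¹ * s * (h : G)) * ((h : G))⁻¹ = s := by group
      rwa [heq] at h3
end

section
/- For x, y ∈ C_c(G, A), the function H → A defined by h ↦ ∫_G α_s( x(s⁻¹)* y(s⁻¹h) ) Δ_H(h)^{-1/2} ds is well defined, continuous, and compactly supported, with support contained in ((supp x)⁻¹ · (supp y)) ∩ H. -/
open MeasureTheory Pointwise

/-- For `x, y ∈ C_c(G, A)`, the function `h ↦ ∫_G α_s(x(s⁻¹)* y(s⁻¹h)) Δ_H(h)^{-1/2} ds`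
on `H` is continuous and compactly supported, with support contained in
`((supp x)⁻¹ · (supp y)) ∩ H`. -/
theorem stmt_17 {G : Type*} [Group G] [TopologicalSpace G] [IsTopologicalGroup G]
    [LocallyCompactSpace G] [T2Space G] [MeasurableSpace G] [BorelSpace G]
    (μ : Measure G) [μ.IsHaarMeasure]
    (H : Subgroup G) (hH : IsClosed (H : Set G))
    (ΔH : ↥H → ℝ) (hΔH_pos : ∀ h, 0 < ΔH h)
    (hΔH : ∀ (ν : Measure ↥H) [ν.IsHaarMeasure],
      ∀ f : ↥H → ℝ, Continuous f → HasCompactSupport f →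
      ∀ h : ↥H, ∫ k, f (k * h) ∂ν = (ΔH h)⁻¹ * ∫ k, f k ∂ν)
    {A : Type*} [NonUnitalCStarAlgebra A]
    (α : G → A ≃⋆ₐ[ℂ] A) (hα_one : ∀ a : A, α 1 a = a)
    (hα_mul : ∀ s t : G, ∀ a : A, α (s * t) a = α s (α t a))
    (hα_cont : Continuous fun p : G × A => α p.1 p.2)
    (x y : G → A) (hx_cont : Continuous x) (hx_supp : HasCompactSupport x)
    (hy_cont : Continuous y) (hy_supp : HasCompactSupport y)
    (F : ↥H → A)
    (hF : ∀ h : ↥H, F h =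
      ∫ s, (Real.sqrt (ΔH h))⁻¹ • α s (star (x s⁻¹) * y (s⁻¹ * (h : G))) ∂μ) :
    Continuous F ∧ HasCompactSupport F ∧
      tsupport F ⊆ {h : ↥H | (h : G) ∈ (tsupport x)⁻¹ * tsupport y} := by
  classical
  -- the compact set `K = (tsupport x)⁻¹ * tsupport y`
  set K : Set G := (tsupport x)⁻¹ * tsupport y with hK_def
  have hK_comp : IsCompact K := hx_supp.inv.mul hy_supp
  -- vanishing of the integrand outside `K`
  have hvan : ∀ h : ↥H, (h : G) ∉ K → ∀ s : G,
      star (x s⁻¹) * y (s⁻¹ * (h : G)) = 0 := by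
    intro h hh s
    by_contra hc
    apply hh
    have hx0 : x s⁻¹ ≠ 0 := by
      intro e; exact hc (by simp [e])
    have hy0 : y (s⁻¹ * (h : G)) ≠ 0 := by
      intro e; exact hc (by simp [e])
    refine ⟨s, ?_, s⁻¹ * (h : G), subset_tsupport _ hy0, by group⟩
    rw [Set.mem_inv]
    exact subset_tsupport _ hx0
  -- `F` vanishes outside `K`
  have hFzero : ∀ h : ↥H, (h : G) ∉ K → F h = 0 := by
    intro h hh
    rw [hF h]
    have : ∀ s : G, (Real.sqrt (ΔH h))⁻¹ • α s (star (x s⁻¹) * y (s⁻¹ * (h : G))) = 0 := by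
      intro s
      rw [hvan h hh s, map_zero, smul_zero]
    simp only [this, integral_zero]
  -- support facts
  have hS_closed : IsClosed ((Subtype.val : ↥H → G) ⁻¹' K) :=
    hK_comp.isClosed.preimage continuous_subtype_val
  have hsupp : tsupport F ⊆ (Subtype.val : ↥H → G) ⁻¹' K := by
    apply closure_minimal _ hS_closed
    intro h hh
    by_contra hc
    exact hh (hFzero h hc)
  have hS_comp : IsCompact ((Subtype.val : ↥H → G) ⁻¹' K) :=
    hH.isClosedEmbedding_subtypeVal.isCompact_preimage hK_comp
  have hF_comp : HasCompactSupport F :=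
    hS_comp.of_isClosed_subset (isClosed_tsupport F) hsupp
  -- continuity of the unscaled integral
  have hI : Continuous fun h : ↥H =>
      ∫ s, α s (star (x s⁻¹) * y (s⁻¹ * (h : G))) ∂μ := by
    rw [← continuousOn_univ]
    apply continuousOn_integral_of_compact_support (k := (tsupport x)⁻¹) hx_supp.inv
    · apply Continuous.continuousOn
      exact hα_cont.comp (continuous_snd.prodMk
        (((hx_cont.comp continuous_snd.inv).star).mul
          (hy_cont.comp (continuous_snd.inv.mul
            (continuous_subtype_val.comp continuous_fst)))))
    · intro h s _ hs
      have : x s⁻¹ = 0 := by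
        apply image_eq_zero_of_notMem_tsupport
        intro hc
        exact hs (Set.mem_inv.mpr hc)
      rw [this, star_zero, zero_mul, map_zero]
  -- continuity of `ΔH`
  haveI : LocallyCompactSpace ↥H := hH.locallyCompactSpace
  haveI : BorelSpace ↥H := Subtype.borelSpace (H : Set G)
  obtain ⟨K₀⟩ : Nonempty (TopologicalSpace.PositiveCompacts ↥H) := inferInstance
  set ν : Measure ↥H := Measure.haarMeasure K₀ with hν_def
  obtain ⟨f, f_one, _, f_comp, f_mem⟩ :=
    exists_continuous_one_zero_of_isCompact (isCompact_singleton (x := (1 : ↥H)))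
      isClosed_empty (by simp)
  set c : ℝ := ∫ k, f k ∂ν with hc_def
  have hc_pos : 0 < c := by
    rw [hc_def, integral_pos_iff_support_of_nonneg (fun k => (f_mem k).1)
      (f.continuous.integrable_of_hasCompactSupport f_comp)]
    have hopen : IsOpen (Function.support f) := f.continuous.isOpen_support
    refine hopen.measure_pos ν ⟨1, ?_⟩
    simp [Function.mem_support, f_one (Set.mem_singleton _)]
  have hJ : ∀ h : ↥H, ∫ k, f (k * h) ∂ν = (ΔH h)⁻¹ * c :=
    hΔH ν f f.continuous f_comp
  have hJc : Continuous fun h : ↥H => ∫ k, f (k * h) ∂ν := by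
    rw [continuous_iff_continuousAt]
    intro h₀
    obtain ⟨t, t_comp, ht⟩ := exists_compact_mem_nhds h₀
    have : ContinuousOn (fun h : ↥H => ∫ k, f (k * h) ∂ν) t := by
      apply continuousOn_integral_of_compact_support (k := tsupport f * t⁻¹)
        (f_comp.mul t_comp.inv)
      · exact (f.continuous.comp (continuous_snd.mul continuous_fst)).continuousOn
      · intro h k hh hk
        by_contra hne
        exact hk ⟨k * h, subset_tsupport _ hne, h⁻¹, Set.inv_mem_inv.mpr hh, by group⟩
    exact this.continuousAt ht
  have hΔcont : Continuous ΔH := by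
    have h1 : Continuous fun h : ↥H => c * (∫ k, f (k * h) ∂ν)⁻¹ :=
      continuous_const.mul (hJc.inv₀ fun h => by
        rw [hJ h]
        exact (mul_pos (inv_pos.mpr (hΔH_pos h)) hc_pos).ne')
    convert h1 using 1
    funext h
    rw [hJ h]
    field_simp
  have hcc : Continuous fun h : ↥H => (Real.sqrt (ΔH h))⁻¹ :=
    (Real.continuous_sqrt.comp hΔcont).inv₀
      fun h => (Real.sqrt_pos.mpr (hΔH_pos h)).ne'
  have hF' : F = fun h : ↥H => (Real.sqrt (ΔH h))⁻¹ •
      ∫ s, α s (star (x s⁻¹) * y (s⁻¹ * (h : G))) ∂μ := by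
    funext h
    rw [hF h, integral_smul]
  refine ⟨?_, hF_comp, hsupp⟩
  rw [hF']
  exact hcc.smul hI
end
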